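/- In the quotient algebra B(m,k) = B_0(m,k)/J, if idempotent states x and y are far (i.e., |x_j − y_j| > 1 for some j in their increasing enumerations), then I_x·B(m,k)·I_y = 0. -/

import Mathlib

/-- Idempotent states: `k`-element subsets of `{0,1,...,m}`. -/
abbrev IdemState (m k : ℕ) := {x : Finset (Fin (m + 1)) // x.card = k}

/-- The weight `v^x` at coordinate `c : Fin m`, representing the paper's
`v^x_{c+1} = #{a ∈ x : a ≥ c+1}` (coordinate `c` corresponds to the strand
labelled `c+1`). -/
def vwt {m : ℕ} (x : Finset (Fin (m + 1))) (c : Fin m) : ℕ :=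
  (x.filter (fun a => (c : ℕ) < a.val)).card

/-- Twice the minimal relative weight: `2·w^{x,y}_{c+1} = |v^x_{c+1} − v^y_{c+1}|`. -/
def wnum {m : ℕ} (x y : Finset (Fin (m + 1))) (c : Fin m) : ℕ :=
  ((vwt x c : ℤ) - (vwt y c : ℤ)).natAbs

/-- Basis elements of `B₀(m,k)`: a pair of idempotent states together with a
monomial `U_1^{s_1} ⋯ U_m^{s_m}` (recorded by its exponents); the basis element
is `φ^{x,y}(U^s)`. -/
structure BGen (m k : ℕ) where
  l : IdemState m k
  r : IdemState m k
  s : Fin m → ℕ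
deriving DecidableEq

/-- The exponents `t_i = w^{x,y}_i + w^{y,z}_i − w^{x,z}_i` of the correction
monomial `g^{x,y,z} = U_1^{t_1} ⋯ U_m^{t_m}`. -/
def texp {m k : ℕ} (x y z : IdemState m k) (c : Fin m) : ℕ :=
  (wnum x.1 y.1 c + wnum y.1 z.1 c - wnum x.1 z.1 c) / 2

/-- The product of two basis elements of `B₀(m,k)`:
`φ^{x,y}(U^s) * φ^{y',z}(U^{s'})` is zero (i.e. `none`) unless `y = y'`, in
which case it equals `φ^{x,z}(U^s · U^{s'} · g^{x,y,z})`. -/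
def mulBGen {m k : ℕ} (a b : BGen m k) : Option (BGen m k) :=
  if a.r = b.l then
    some ⟨a.l, b.r, fun c => a.s c + b.s c + texp a.l a.r b.r c⟩
  else none

/-- The underlying `F₂`-vector space of the algebra `B₀(m,k)`: formal `F₂`-linear
combinations of the basis elements `φ^{x,y}(U^s)`. -/
def B0 (m k : ℕ) : Type := BGen m k →₀ ZMod 2

noncomputable instance {m k : ℕ} : AddCommGroup (B0 m k) :=
  inferInstanceAs (AddCommGroup (BGen m k →₀ ZMod 2))

/-- View an element of `B₀(m,k)` as a finitely supported function. -/
def B0.toF {m k : ℕ} (f : B0 m k) : BGen m k →₀ ZMod 2 := f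

/-- The multiplication of `B₀(m,k)`, the bilinear extension of `mulBGen`. -/
noncomputable def mulB {m k : ℕ} (f g : B0 m k) : B0 m k :=
  (B0.toF f).sum fun a ca =>
    (B0.toF g).sum fun b cb =>
      match mulBGen a b with
      | some c => Finsupp.single c (ca * cb)
      | none => 0

noncomputable instance {m k : ℕ} : Mul (B0 m k) := ⟨mulB⟩

/-- The basis element `φ^{x,y}(U^s)` of `B₀(m,k)`. -/
noncomputable def bElt {m k : ℕ} (g : BGen m k) : B0 m k := Finsupp.single g 1

/-- The basic idempotent `I_x ∈ B₀(m,k)`. -/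
noncomputable def idemElt {m k : ℕ} (x : IdemState m k) : B0 m k :=
  bElt ⟨x, x, fun _ => 0⟩

/-- The central element `U_i = Σ_x φ^{x,x}(U_i)`; the index `i : Fin m`
corresponds to the paper's `U_{i+1}`. -/
noncomputable def UElt {m k : ℕ} (i : Fin m) : B0 m k :=
  ∑ x : IdemState m k, bElt (⟨x, x, fun c => if c = i then 1 else 0⟩ : BGen m k)

/-- The right-shift `R = Σ R^x`, moving an occupied position from `i` to `i+1`
(the paper's `R_{i+1}`). -/
noncomputable def RElt {m k : ℕ} (i : Fin m) : B0 m k :=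
  ∑ p : IdemState m k × IdemState m k,
    if i.castSucc ∈ p.1.1 ∧ i.succ ∉ p.1.1 ∧
        p.2.1 = insert i.succ (p.1.1.erase i.castSucc) then
      bElt (⟨p.1, p.2, fun _ => 0⟩ : BGen m k)
    else 0

/-- The left-shift `L = Σ L^y`, moving an occupied position from `i+1` to `i`
(the paper's `L_{i+1}`). -/
noncomputable def LElt {m k : ℕ} (i : Fin m) : B0 m k :=
  ∑ p : IdemState m k × IdemState m k,
    if i.succ ∈ p.1.1 ∧ i.castSucc ∉ p.1.1 ∧
        p.2.1 = insert i.castSucc (p.1.1.erase i.succ) then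
      bElt (⟨p.1, p.2, fun _ => 0⟩ : BGen m k)
    else 0

/-- The generating set of the two-sided ideal `J`: the elements
`L_{i+1}·L_i`, `R_i·R_{i+1}`, and `I_x·U_j` for states `x` with
`x ∩ {j−1, j} = ∅`. -/
def JGenerators (m k : ℕ) : Set (B0 m k) :=
  {z | ∃ i i' : Fin m, (i' : ℕ) = (i : ℕ) + 1 ∧
        (z = LElt i' * LElt i ∨ z = RElt i * RElt i')} ∪
  {z | ∃ (j : Fin m) (x : IdemState m k),
        j.castSucc ∉ x.1 ∧ j.succ ∉ x.1 ∧ z = idemElt x * UElt j}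

/-- The two-sided ideal `J ⊆ B₀(m,k)` generated by `JGenerators`:  since
`B₀(m,k)` is unital, it is the additive subgroup generated by all products
`a·g·b` with `g` a generator. -/
noncomputable def JIdeal (m k : ℕ) : AddSubgroup (B0 m k) :=
  AddSubgroup.closure {z | ∃ g ∈ JGenerators m k, ∃ a b : B0 m k, z = a * g * b}

/-- The map `φ^{x,y} : F₂[U_1,...,U_m] → I_x·B₀(m,k)·I_y`. -/
noncomputable def phiMap {m k : ℕ} (x y : IdemState m k)
    (p : MvPolynomial (Fin m) (ZMod 2)) : B0 m k :=
  ∑ d ∈ p.support, Finsupp.single (⟨x, y, fun c => d c⟩ : BGen m k) (MvPolynomial.coeff d p)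

/-- Two idempotent states are *far* if some pair of corresponding entries of
their increasing enumerations differs by more than `1`. -/
def FarStates {m k : ℕ} (x y : IdemState m k) : Prop :=
  ∃ j : Fin k,
    1 < |(((x.1.orderIsoOfFin x.2 j : Fin (m + 1)) : ℕ) : ℤ) -
          (((y.1.orderIsoOfFin y.2 j : Fin (m + 1)) : ℕ) : ℤ)|

/-- `[i+1, j]` is a *generating interval* for `(x, y)`: here `0 ≤ i < j ≤ m`,
`i, j ∉ x ∩ y`, every `t` with `i < t < j` lies in `x ∩ y`, and `w^{x,y}_t = 0`
for all `i+1 ≤ t ≤ j` (a paper index `t` corresponds to the coordinate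
`c = t − 1 : Fin m`). -/
def GenInterval {m k : ℕ} (x y : IdemState m k) (i j : ℕ) : Prop :=
  i < j ∧ j ≤ m ∧
  (∀ a : Fin (m + 1), (a.val = i ∨ a.val = j) → ¬(a ∈ x.1 ∧ a ∈ y.1)) ∧
  (∀ a : Fin (m + 1), i < a.val → a.val < j → a ∈ x.1 ∧ a ∈ y.1) ∧
  (∀ c : Fin m, i ≤ (c : ℕ) → (c : ℕ) < j → wnum x.1 y.1 c = 0)

/-- The monomial `U_{i+1} ⋯ U_j` associated to a generating interval. -/
noncomputable def intervalMonomial {m : ℕ} (i j : ℕ) : MvPolynomial (Fin m) (ZMod 2) :=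
  ∏ c ∈ Finset.univ.filter (fun c : Fin m => i ≤ (c : ℕ) ∧ (c : ℕ) < j),
    MvPolynomial.X c

open Classical in
/-- The ideal `I(x,y) ⊆ F₂[U_1,...,U_m]`: everything if `x` and `y` are far,
and otherwise the ideal generated by the monomials of the generating intervals
for `(x,y)`. -/
noncomputable def IIdeal {m k : ℕ} (x y : IdemState m k) :
    Ideal (MvPolynomial (Fin m) (ZMod 2)) :=
  if FarStates x y then ⊤
  else Ideal.span {q | ∃ i j : ℕ, GenInterval x y i j ∧ q = intervalMonomial i j}

/-!
Say `x_j + 2 ≤ y_j` in the increasing enumerations (the case `y_j + 2 ≤ x_j` is the mirror image,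
with left shifts). For `x_j ≤ b ≤ y_j` let `w_b` be the state enumerated by `x_t` for `t < j`,
by `b` for `t = j` and by `max x_t y_t` for `t > j`. With `a = x_j`, the states
`w_a, w_{a+1}, w_{a+2}` arise from each other by moving the particle at `a` right twice, and
coordinatewise `v^x ≤ v^{w_a} ≤ v^{w_{a+1}} ≤ v^{w_{a+2}} ≤ max v^x v^y`. So every correction
monomial along `x, w_a, w_{a+1}, w_{a+2}, y` is `1`, and
`φ^{x,y}(U^s) = φ^{x,w_a}(1) · (R R) · φ^{w_{a+2},y}(U^s) ∈ J`, where `R R` is the generator of `J`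
made of these two shifts. Regrouping this product uses that `B₀(m,k)` is associative, which is the
cocycle identity `g^{x,y,z} g^{x,z,w} = g^{x,y,w} g^{y,z,w}` of the correction monomials.
-/

open Finset Function

theorem Finset.card_filter_lt_le_max {ι α : Type*} [Fintype ι] [LinearOrder ι] [LinearOrder α]
    {f g h : ι → α} (hg : Monotone g) (hh : Monotone h) (hf : ∀ t, f t ≤ max (g t) (h t))
    (c : α) : #{t | c < f t} ≤ max #{t | c < g t} #{t | c < h t} := by
  have hsub : ({t | c < f t} : Finset ι) ⊆
      ({t | c < g t} : Finset ι) ∪ ({t | c < h t} : Finset ι) := fun t ht => by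
    simpa [lt_max_iff] using (mem_filter.1 ht).2.trans_le (hf t)
  refine (card_le_card hsub).trans ?_
  rcases ((isUpperSet_Ioi c).preimage hg).total ((isUpperSet_Ioi c).preimage hh) with hgh | hhg
  · rw [union_eq_right.2 fun t ht => by simpa using hgh (by simpa using ht)]
    exact le_max_right _ _
  · rw [union_eq_left.2 fun t ht => by simpa using hhg (by simpa using ht)]
    exact le_max_left _ _

theorem Finset.image_update_univ {ι α : Type*} [Fintype ι] [DecidableEq ι] [DecidableEq α]
    {f : ι → α} (hf : Injective f) (j : ι) (b : α) :
    univ.image (update f j b) = insert b ((univ.image f).erase (f j)) := by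
  rw [← image_erase hf, ← insert_erase (mem_univ j), image_insert, update_self,
    erase_insert (notMem_erase j _)]
  congr 1
  exact image_congr fun t ht => update_of_ne (ne_of_mem_erase ht) _ _

section

variable {m k : ℕ}

theorem texp_add_texp (x y z w : IdemState m k) (c : Fin m) :
    texp x y z c + texp x z w c = texp x y w c + texp y z w c := by
  simp only [texp, wnum]
  omega

theorem mulBGen_bind_assoc (a b c : BGen m k) :
    (mulBGen a b).bind (mulBGen · c) = (mulBGen b c).bind (mulBGen a ·) := by
  unfold mulBGen
  split_ifs with hab hbc <;>
    simp_all only [Option.bind_none, Option.bind_some, ↓reduceIte, Option.some.injEq,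
      BGen.mk.injEq, true_and]
  funext i
  have := texp_add_texp a.l b.l c.l c.r i
  omega

namespace B0

noncomputable def optionSingle (o : Option (BGen m k)) (r : ZMod 2) : B0 m k :=
  match o with
  | some c => Finsupp.single c r
  | none => 0

theorem optionSingle_zero (o : Option (BGen m k)) : optionSingle o 0 = 0 := by
  cases o
  · rfl
  · exact Finsupp.single_zero _

theorem optionSingle_add (o : Option (BGen m k)) (r s : ZMod 2) :
    optionSingle o (r + s) = optionSingle o r + optionSingle o s := by
  cases o
  · exact (add_zero 0).symm
  · exact Finsupp.single_add _ _ _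

theorem mul_eq_sum (f g : B0 m k) :
    f * g = Finsupp.sum (toF f) fun a r => Finsupp.sum (toF g) fun b s =>
      optionSingle (mulBGen a b) (r * s) := rfl

protected theorem mul_add (f g h : B0 m k) : f * (g + h) = f * g + f * h := by
  simp only [mul_eq_sum, ← Finsupp.sum_add]
  refine Finsupp.sum_congr fun a _ => Finsupp.sum_add_index' (fun _ => ?_) fun _ _ _ => ?_
  · rw [mul_zero, optionSingle_zero]
  · rw [mul_add, optionSingle_add]

protected theorem add_mul (f g h : B0 m k) : (f + g) * h = f * h + g * h := by
  simp only [mul_eq_sum]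
  refine Finsupp.sum_add_index' (fun _ => ?_) fun _ _ _ => ?_
  · simp only [zero_mul, optionSingle_zero, Finsupp.sum_fun_zero]
  · simp only [add_mul, optionSingle_add, Finsupp.sum_add]

protected theorem zero_mul (f : B0 m k) : 0 * f = 0 :=
  (mul_eq_sum 0 f).trans Finsupp.sum_zero_index

protected theorem mul_zero (f : B0 m k) : f * 0 = 0 := by
  rw [mul_eq_sum]
  exact (Finsupp.sum_congr fun _ _ => Finsupp.sum_zero_index).trans (Finsupp.sum_fun_zero _)

theorem induction_bElt {motive : B0 m k → Prop} (zero : motive 0)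
    (add : ∀ f g, motive f → motive g → motive (f + g)) (basis : ∀ a, motive (bElt a))
    (f : B0 m k) : motive f := by
  refine Finsupp.induction_linear f zero add fun a r => ?_
  obtain rfl | rfl : r = 0 ∨ r = 1 := by revert r; decide
  · rw [show Finsupp.single a (0 : ZMod 2) = (0 : B0 m k) from Finsupp.single_zero a]
    exact zero
  · exact basis a

theorem bElt_mul_bElt (a b : BGen m k) : bElt a * bElt b = optionSingle (mulBGen a b) 1 := by
  rw [mul_eq_sum]
  refine (Finsupp.sum_single_index ?_).trans (Finsupp.sum_single_index ?_) <;>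
    simp only [zero_mul, mul_zero, optionSingle_zero]
  exact Finsupp.sum_fun_zero _

theorem optionSingle_mul_bElt (o : Option (BGen m k)) (c : BGen m k) :
    optionSingle o 1 * bElt c = optionSingle (o.bind (mulBGen · c)) 1 := by
  cases o
  · exact B0.zero_mul _
  · exact bElt_mul_bElt _ _

theorem bElt_mul_optionSingle (a : BGen m k) (o : Option (BGen m k)) :
    bElt a * optionSingle o 1 = optionSingle (o.bind (mulBGen a ·)) 1 := by
  cases o
  · exact B0.mul_zero _
  · exact bElt_mul_bElt _ _

protected theorem mul_assoc (f g h : B0 m k) : f * g * h = f * (g * h) := by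
  induction f using induction_bElt with
  | zero => simp only [B0.zero_mul]
  | add f f' hf hf' => simp only [B0.add_mul, hf, hf']
  | basis a =>
    induction g using induction_bElt with
    | zero => simp only [B0.mul_zero, B0.zero_mul]
    | add g g' hg hg' => simp only [B0.mul_add, B0.add_mul, hg, hg']
    | basis b =>
      induction h using induction_bElt with
      | zero => simp only [B0.mul_zero]
      | add h h' hh hh' => simp only [B0.mul_add, hh, hh']
      | basis c =>
        rw [bElt_mul_bElt, bElt_mul_bElt, optionSingle_mul_bElt, bElt_mul_optionSingle,
          mulBGen_bind_assoc]

noncomputable instance : NonUnitalRing (B0 m k) where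
  __ := instAddCommGroupB0
  __ := instMulB0
  left_distrib := B0.mul_add
  right_distrib := B0.add_mul
  zero_mul := B0.zero_mul
  mul_zero := B0.mul_zero
  mul_assoc := B0.mul_assoc

end B0

theorem bElt_mul_bElt_of_texp_eq_zero {x w y : IdemState m k} (s t : Fin m → ℕ)
    (h : ∀ c, texp x w y c = 0) : bElt ⟨x, w, s⟩ * bElt ⟨w, y, t⟩ = bElt ⟨x, y, s + t⟩ := by
  rw [B0.bElt_mul_bElt, mulBGen, if_pos rfl]
  simp only [h, add_zero]
  rfl

theorem bElt_mul_bElt_of_ne {a b : BGen m k} (h : a.r ≠ b.l) : bElt a * bElt b = 0 := by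
  rw [B0.bElt_mul_bElt, mulBGen, if_neg h]
  rfl

theorem texp_self_left (x z : IdemState m k) (c : Fin m) : texp x x z c = 0 := by
  simp [texp, wnum]

theorem texp_self_right (x z : IdemState m k) (c : Fin m) : texp x z z c = 0 := by
  simp [texp, wnum]

theorem idemElt_mul_bElt (x : IdemState m k) (g : BGen m k) :
    idemElt x * bElt g = if g.l = x then bElt g else 0 := by
  obtain ⟨l, r, s⟩ := g
  split_ifs with h
  · subst h
    exact (bElt_mul_bElt_of_texp_eq_zero 0 s (texp_self_left l r)).trans (by rw [zero_add])
  · exact bElt_mul_bElt_of_ne (Ne.symm h)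

theorem bElt_mul_idemElt (g : BGen m k) (y : IdemState m k) :
    bElt g * idemElt y = if g.r = y then bElt g else 0 := by
  obtain ⟨l, r, s⟩ := g
  split_ifs with h
  · subst h
    exact (bElt_mul_bElt_of_texp_eq_zero s 0 (texp_self_right l r)).trans (by rw [add_zero])
  · exact bElt_mul_bElt_of_ne h

def IsShift (a b : Fin (m + 1)) (w w' : IdemState m k) : Prop :=
  a ∈ w.1 ∧ b ∉ w.1 ∧ w'.1 = insert b (w.1.erase a)

theorem IsShift.symm {a b : Fin (m + 1)} {w w' : IdemState m k} (h : IsShift a b w w') :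
    IsShift b a w' w := by
  obtain ⟨ha, hb, hw'⟩ := h
  have hab : a ≠ b := ne_of_mem_of_not_mem ha hb
  refine ⟨hw' ▸ mem_insert_self b _, ?_, ?_⟩
  · rw [hw', mem_insert, mem_erase]
    tauto
  · rw [hw', erase_insert fun h => hb (mem_of_mem_erase h), insert_erase ha]

noncomputable def shiftElt (a b : Fin (m + 1)) : B0 m k :=
  ∑ p : IdemState m k × IdemState m k,
    if a ∈ p.1.1 ∧ b ∉ p.1.1 ∧ p.2.1 = insert b (p.1.1.erase a) then
      bElt (⟨p.1, p.2, 0⟩ : BGen m k)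
    else 0

theorem RElt_eq_shiftElt (i : Fin m) : (RElt i : B0 m k) = shiftElt i.castSucc i.succ := rfl

theorem LElt_eq_shiftElt (i : Fin m) : (LElt i : B0 m k) = shiftElt i.succ i.castSucc := rfl

theorem bElt_mul_shiftElt {x w w' : IdemState m k} {a b : Fin (m + 1)} (s : Fin m → ℕ)
    (h : IsShift a b w w') (hx : ∀ c, texp x w w' c = 0) :
    bElt ⟨x, w, s⟩ * shiftElt a b = bElt ⟨x, w', s⟩ := by
  rw [shiftElt, mul_sum, sum_eq_single (w, w')]
  · rw [if_pos (show a ∈ w.1 ∧ b ∉ w.1 ∧ w'.1 = insert b (w.1.erase a) from h),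
      bElt_mul_bElt_of_texp_eq_zero _ _ hx, add_zero]
  · rintro ⟨v, v'⟩ - hne
    split_ifs with hv
    · refine bElt_mul_bElt_of_ne fun hw => hne ?_
      subst hw
      exact Prod.ext rfl (Subtype.ext (hv.2.2.trans h.2.2.symm))
    · exact mul_zero _
  · exact fun h => absurd (mem_univ _) h

theorem mul_mul_mem_JIdeal {g : B0 m k} (hg : g ∈ JGenerators m k) (a b : B0 m k) :
    a * g * b ∈ JIdeal m k :=
  AddSubgroup.subset_closure ⟨g, hg, a, b, rfl⟩

theorem rightShifts_mem_JGenerators {i i' : Fin m} (hi : (i' : ℕ) = i + 1) :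
    shiftElt i.castSucc i.succ * shiftElt i.succ i'.succ ∈ JGenerators m k := by
  have : i'.castSucc = i.succ := Fin.ext (by simp [hi])
  exact Or.inl ⟨i, i', hi, Or.inr (by rw [RElt_eq_shiftElt, RElt_eq_shiftElt, this])⟩

theorem leftShifts_mem_JGenerators {i i' : Fin m} (hi : (i' : ℕ) = i + 1) :
    shiftElt i'.succ i.succ * shiftElt i.succ i.castSucc ∈ JGenerators m k := by
  have : i'.castSucc = i.succ := Fin.ext (by simp [hi])
  exact Or.inl ⟨i, i', hi, Or.inl (by rw [LElt_eq_shiftElt, LElt_eq_shiftElt, this])⟩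

theorem bElt_mem_JIdeal_of_shifts {x y w₀ w₁ w₂ : IdemState m k} {a b c : Fin (m + 1)}
    (hJ : shiftElt a b * shiftElt b c ∈ JGenerators m k)
    (h₁ : IsShift a b w₀ w₁) (h₂ : IsShift b c w₁ w₂) (hx₁ : ∀ i, texp x w₀ w₁ i = 0)
    (hx₂ : ∀ i, texp x w₁ w₂ i = 0) (hy : ∀ i, texp x w₂ y i = 0) (s : Fin m → ℕ) :
    bElt ⟨x, y, s⟩ ∈ JIdeal m k := by
  have : bElt ⟨x, y, s⟩ = bElt ⟨x, w₀, 0⟩ * (shiftElt a b * shiftElt b c) * bElt ⟨w₂, y, s⟩ := by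
    rw [← mul_assoc, bElt_mul_shiftElt _ h₁ hx₁, bElt_mul_shiftElt _ h₂ hx₂,
      bElt_mul_bElt_of_texp_eq_zero _ _ hy, zero_add]
  exact this ▸ mul_mul_mem_JIdeal hJ _ _

theorem vwt_image {f : Fin k → Fin (m + 1)} (hf : Injective f) (c : Fin m) :
    vwt (univ.image f) c = #{t | c.castSucc < f t} := by
  rw [vwt, filter_image, card_image_of_injective _ hf]
  rfl

theorem vwt_image_le_vwt_image {f g : Fin k → Fin (m + 1)} (hf : Injective f)
    (hg : Injective g) (h : ∀ t, f t ≤ g t) (c : Fin m) :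
    vwt (univ.image f) c ≤ vwt (univ.image g) c := by
  rw [vwt_image hf, vwt_image hg]
  exact card_le_card fun t ht => by simpa using (mem_filter.1 ht).2.trans_le (h t)

theorem vwt_image_le_max {f g h : Fin k → Fin (m + 1)} (hf : Injective f) (hg : StrictMono g)
    (hh : StrictMono h) (hfgh : ∀ t, f t ≤ max (g t) (h t)) (c : Fin m) :
    vwt (univ.image f) c ≤ max (vwt (univ.image g) c) (vwt (univ.image h) c) := by
  rw [vwt_image hf, vwt_image hg.injective, vwt_image hh.injective]
  exact card_filter_lt_le_max hg.monotone hh.monotone hfgh _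

namespace IdemState

def enum (x : IdemState m k) : Fin k ↪o Fin (m + 1) := x.1.orderEmbOfFin x.2

theorem image_enum (x : IdemState m k) : univ.image x.enum = x.1 :=
  image_orderEmbOfFin_univ x.1 x.2

end IdemState

section Push

variable (x y : IdemState m k) (j : Fin k)

def pushEnum (b : Fin (m + 1)) : Fin k → Fin (m + 1) :=
  update (fun t => if t < j then x.enum t else max (x.enum t) (y.enum t)) j b

variable {x y j} {b b' : Fin (m + 1)}

theorem pushEnum_of_lt {t : Fin k} (ht : t < j) : pushEnum x y j b t = x.enum t := by
  rw [pushEnum, update_of_ne ht.ne, if_pos ht]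

theorem pushEnum_of_gt {t : Fin k} (ht : j < t) :
    pushEnum x y j b t = max (x.enum t) (y.enum t) := by
  rw [pushEnum, update_of_ne ht.ne', if_neg (lt_asymm ht)]

theorem pushEnum_self : pushEnum x y j b j = b := update_self _ _ _

theorem pushEnum_lt (hb : b ∈ Set.Icc (x.enum j) (y.enum j)) {t : Fin k} (ht : t < j) :
    pushEnum x y j b' t < b := by
  rw [pushEnum_of_lt ht]
  exact (x.enum.strictMono ht).trans_le hb.1

theorem lt_pushEnum (hb : b ∈ Set.Icc (x.enum j) (y.enum j)) {t : Fin k} (ht : j < t) :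
    b < pushEnum x y j b' t := by
  rw [pushEnum_of_gt ht]
  exact hb.2.trans_lt ((y.enum.strictMono ht).trans_le (le_max_right _ _))

theorem pushEnum_strictMono (hb : b ∈ Set.Icc (x.enum j) (y.enum j)) :
    StrictMono (pushEnum x y j b) := by
  intro t t' htt'
  rcases lt_trichotomy t' j with ht' | rfl | ht'
  · rw [pushEnum_of_lt ht', pushEnum_of_lt (htt'.trans ht')]
    exact x.enum.strictMono htt'
  · rw [pushEnum_self]
    exact pushEnum_lt hb htt'
  · rw [pushEnum_of_gt ht']
    rcases lt_trichotomy t j with ht | rfl | ht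
    · rw [pushEnum_of_lt ht]
      exact (x.enum.strictMono htt').trans_le (le_max_left _ _)
    · rw [pushEnum_self, ← pushEnum_of_gt (b := b) ht']
      exact lt_pushEnum hb ht'
    · rw [pushEnum_of_gt ht]
      exact max_lt_max (x.enum.strictMono htt') (y.enum.strictMono htt')

theorem pushEnum_ne (hb' : b' ∈ Set.Icc (x.enum j) (y.enum j)) {t : Fin k} (ht : t ≠ j) :
    pushEnum x y j b t ≠ b' := by
  rcases ht.lt_or_gt with ht | ht
  · exact (pushEnum_lt hb' ht).ne
  · exact (lt_pushEnum hb' ht).ne'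

def pushState (hb : b ∈ Set.Icc (x.enum j) (y.enum j)) : IdemState m k :=
  ⟨univ.image (pushEnum x y j b), by
    rw [card_image_of_injective _ (pushEnum_strictMono hb).injective, card_univ, Fintype.card_fin]⟩

theorem isShift_pushState (hb : b ∈ Set.Icc (x.enum j) (y.enum j))
    (hb' : b' ∈ Set.Icc (x.enum j) (y.enum j)) (hne : b ≠ b') :
    IsShift b b' (pushState hb) (pushState hb') := by
  refine ⟨mem_image.2 ⟨j, mem_univ _, pushEnum_self⟩, ?_, ?_⟩
  · intro hmem
    obtain ⟨t, -, ht⟩ := mem_image.1 hmem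
    rcases eq_or_ne t j with rfl | htj
    · exact hne (pushEnum_self.symm.trans ht)
    · exact pushEnum_ne hb' htj ht
  · have : pushEnum x y j b' = update (pushEnum x y j b) j b' := (update_idem _ _ _).symm
    simp only [pushState]
    rw [this, image_update_univ (pushEnum_strictMono hb).injective, pushEnum_self]

theorem vwt_le_vwt_pushState (hb : b ∈ Set.Icc (x.enum j) (y.enum j)) (c : Fin m) :
    vwt x.1 c ≤ vwt (pushState hb).1 c := by
  rw [← x.image_enum]
  refine vwt_image_le_vwt_image x.enum.injective (pushEnum_strictMono hb).injective
    (fun t => ?_) c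
  rcases lt_trichotomy t j with ht | rfl | ht
  · rw [pushEnum_of_lt ht]
  · rw [pushEnum_self]; exact hb.1
  · rw [pushEnum_of_gt ht]; exact le_max_left _ _

theorem vwt_pushState_mono (hb : b ∈ Set.Icc (x.enum j) (y.enum j))
    (hb' : b' ∈ Set.Icc (x.enum j) (y.enum j)) (hbb' : b ≤ b') (c : Fin m) :
    vwt (pushState hb).1 c ≤ vwt (pushState hb').1 c := by
  refine vwt_image_le_vwt_image (pushEnum_strictMono hb).injective
    (pushEnum_strictMono hb').injective (fun t => ?_) c
  rcases eq_or_ne t j with rfl | ht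
  · rwa [pushEnum_self, pushEnum_self]
  · simp only [pushEnum, update_of_ne ht, le_refl]

theorem vwt_pushState_le_max (hb : b ∈ Set.Icc (x.enum j) (y.enum j)) (c : Fin m) :
    vwt (pushState hb).1 c ≤ max (vwt x.1 c) (vwt y.1 c) := by
  rw [← x.image_enum, ← y.image_enum]
  refine vwt_image_le_max (pushEnum_strictMono hb).injective x.enum.strictMono
    y.enum.strictMono (fun t => ?_) c
  rcases lt_trichotomy t j with ht | rfl | ht
  · rw [pushEnum_of_lt ht]; exact le_max_left _ _
  · rw [pushEnum_self]; exact hb.2.trans (le_max_right _ _)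
  · rw [pushEnum_of_gt ht]

theorem exists_shift_path (hj : (x.enum j : ℕ) + 2 ≤ y.enum j) :
    ∃ (i i' : Fin m) (w₀ w₁ w₂ : IdemState m k), (i' : ℕ) = i + 1 ∧
      IsShift i.castSucc i.succ w₀ w₁ ∧ IsShift i.succ i'.succ w₁ w₂ ∧
      ∀ c, vwt x.1 c ≤ vwt w₀.1 c ∧ vwt w₀.1 c ≤ vwt w₁.1 c ∧ vwt w₁.1 c ≤ vwt w₂.1 c ∧
        vwt w₂.1 c ≤ max (vwt x.1 c) (vwt y.1 c) := by
  have hm : (x.enum j : ℕ) + 2 ≤ m := hj.trans (Nat.lt_succ_iff.1 (y.enum j).2)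
  let i : Fin m := ⟨x.enum j, by omega⟩
  let i' : Fin m := ⟨x.enum j + 1, by omega⟩
  have h₀ : i.castSucc ∈ Set.Icc (x.enum j) (y.enum j) := by
    simp only [Set.mem_Icc, Fin.le_def, Fin.val_castSucc, i]; omega
  have h₁ : i.succ ∈ Set.Icc (x.enum j) (y.enum j) := by
    simp only [Set.mem_Icc, Fin.le_def, Fin.val_succ, i]; omega
  have h₂ : i'.succ ∈ Set.Icc (x.enum j) (y.enum j) := by
    simp only [Set.mem_Icc, Fin.le_def, Fin.val_succ, i']; omega
  have h₀₁ : i.castSucc ≤ i.succ := Fin.castSucc_le_succ i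
  have h₁₂ : i.succ ≤ i'.succ := by simp [Fin.le_def, i, i']
  refine ⟨i, i', pushState h₀, pushState h₁, pushState h₂, rfl,
    isShift_pushState h₀ h₁ Fin.castSucc_lt_succ.ne,
    isShift_pushState h₁ h₂ (by simp [Fin.ext_iff, i, i']), fun c =>
    ⟨vwt_le_vwt_pushState h₀ c, vwt_pushState_mono h₀ h₁ h₀₁ c,
      vwt_pushState_mono h₁ h₂ h₁₂ c, vwt_pushState_le_max h₂ c⟩⟩

end Push

theorem bElt_mem_JIdeal_of_farStates {x y : IdemState m k} (hfar : FarStates x y)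
    (s : Fin m → ℕ) : bElt ⟨x, y, s⟩ ∈ JIdeal m k := by
  obtain ⟨j, hj⟩ := hfar
  simp only [coe_orderIsoOfFin_apply] at hj
  change 1 < |((x.enum j : ℕ) : ℤ) - ((y.enum j : ℕ) : ℤ)| at hj
  rcases lt_abs.1 hj with hj | hj
  · obtain ⟨i, i', w₀, w₁, w₂, hi, h₁, h₂, hv⟩ :=
      exists_shift_path (x := y) (y := x) (j := j) (by omega)
    refine bElt_mem_JIdeal_of_shifts (leftShifts_mem_JGenerators hi) h₂.symm h₁.symm ?_ ?_ ?_ s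
    all_goals
      intro c
      have := hv c
      simp only [texp, wnum]
      omega
  · obtain ⟨i, i', w₀, w₁, w₂, hi, h₁, h₂, hv⟩ :=
      exists_shift_path (x := x) (y := y) (j := j) (by omega)
    refine bElt_mem_JIdeal_of_shifts (rightShifts_mem_JGenerators hi) h₁ h₂ ?_ ?_ ?_ s
    all_goals
      intro c
      have := hv c
      simp only [texp, wnum]
      omega

end

theorem far_states_kill_general (m k : ℕ) (x y : IdemState m k)
    (hfar : FarStates x y) :
    ∀ a : B0 m k, idemElt x * a * idemElt y ∈ JIdeal m k := by
  intro a
  induction a using B0.induction_bElt with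
  | zero => simpa only [mul_zero, zero_mul] using (JIdeal m k).zero_mem
  | add f g hf hg => simpa only [mul_add, add_mul] using add_mem hf hg
  | basis g =>
    obtain ⟨l, r, s⟩ := g
    rw [idemElt_mul_bElt, ite_mul, bElt_mul_idemElt, zero_mul]
    split_ifs with hl hr
    · subst hl hr
      exact bElt_mem_JIdeal_of_farStates hfar s
    all_goals exact zero_mem _

/-- In the quotient algebra `B(m,k) = B₀(m,k)/J`, if the
idempotent states `x` and `y` are far (some pair of entries of their increasing
enumerations differs by more than `1`), then `I_x · B(m,k) · I_y = 0`; that is,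
`I_x · a · I_y ∈ J` for every `a ∈ B₀(m,k)`. -/
theorem far_states_kill (m k : ℕ) (hk : k ≤ m + 1) (x y : IdemState m k)
    (hfar : FarStates x y) :
    ∀ a : B0 m k, idemElt x * a * idemElt y ∈ JIdeal m k :=
  far_states_kill_general m k x y hfar
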